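/- For every integer k ≥ 0, if n = 7·F(2k+1) - 6 where F is the Fibonacci sequence (F(1) = F(2) = 1), then 7·(3·F(2k+1) - F(2k) - 3) = (7n)/2 - (1/2)·√(5(n+6)² - 196), i.e. the edge count of the complete k-layer spiral in the order-7 triangular tiling equals (7/2)n - (1/2)√(5(n+6)² - 14²). -/

import Mathlib

/-!
By Cassini's identity, `F = F(2k+1)` and `G = F(2k)` satisfy `F² - FG - G² = 1`, which makes
`5F² - 4 = (F + 2G)²` a perfect square. Hence the square root equals `7 (F + 2G)` and the
claimed identity becomes linear in `F` and `G`.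
-/

open Real

theorem Nat.fib_two_mul_add_one_sq_sub_mul_sub_sq (k : ℕ) :
    (fib (2 * k + 1) : ℤ) ^ 2 - fib (2 * k + 1) * fib (2 * k) - (fib (2 * k) : ℤ) ^ 2 = 1 := by
  have cassini := Int.fib_succ_mul_fib_pred_sub_fib_sq (2 * k + 1 : ℕ)
  rw [show ((2 * k + 1 : ℕ) : ℤ) + 1 = (2 * k + 2 : ℕ) by push_cast; ring,
    show ((2 * k + 1 : ℕ) : ℤ) - 1 = (2 * k : ℕ) by push_cast; ring, Int.natAbs_natCast,
    (odd_two_mul_add_one k).neg_one_pow] at cassini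
  simp only [Int.fib_natCast, fib_add_two] at cassini
  push_cast at cassini
  linear_combination -cassini

theorem Real.sqrt_five_mul_sq_sub_four_mul_sq {F G c : ℝ} (h : F ^ 2 - F * G - G ^ 2 = 1)
    (hc : 0 ≤ c) (hFG : 0 ≤ F + 2 * G) :
    √(5 * (c * F) ^ 2 - 4 * c ^ 2) = c * (F + 2 * G) := by
  rw [← sqrt_sq (mul_nonneg hc hFG)]
  congr 1
  linear_combination 4 * c ^ 2 * h

/-- For `n = 7 F_{2k+1} - 6`, the edge count `7(3 F_{2k+1} - F_{2k} - 3)` of the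
complete `k`-layer spiral in the order-7 triangular tiling equals
`(7/2) n - (1/2) √(5 (n+6)² - 14²)`. -/
theorem spiral_edge_count (k : ℕ) :
    7 * (3 * (Nat.fib (2 * k + 1) : ℝ) - (Nat.fib (2 * k) : ℝ) - 3) =
      (7 / 2) * (7 * (Nat.fib (2 * k + 1) : ℝ) - 6) -
        (1 / 2) * Real.sqrt (5 * ((7 * (Nat.fib (2 * k + 1) : ℝ) - 6) + 6) ^ 2 - 196) := by
  have cassini : (Nat.fib (2 * k + 1) : ℝ) ^ 2 - Nat.fib (2 * k + 1) * Nat.fib (2 * k)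
      - (Nat.fib (2 * k) : ℝ) ^ 2 = 1 := by
    exact_mod_cast Nat.fib_two_mul_add_one_sq_sub_mul_sub_sq k
  have hsqrt := sqrt_five_mul_sq_sub_four_mul_sq cassini (by norm_num : (0 : ℝ) ≤ 7)
    (by positivity)
  rw [show (5 * ((7 * (Nat.fib (2 * k + 1) : ℝ) - 6) + 6) ^ 2 - 196)
    = 5 * (7 * (Nat.fib (2 * k + 1) : ℝ)) ^ 2 - 4 * 7 ^ 2 by ring, hsqrt]
  ring
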